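/- Every bounded local triple derivation T : A → A on a unital C*-algebra A is a triple derivation. -/

import Mathlib

/-!
Write `h = T 1`. Testing `T` at the unitary `1` shows that `h` is skew-adjoint, and
`x ↦ ½(h x + x h)` is then a triple derivation, so `D = T - ½(h · + · h)` is a bounded local
triple derivation with `D 1 = 0`. Any triple derivation `δ` satisfies `δ v = -v (δ v)* v` on
unitaries `v`, so `v* D v + (D v)* v = 0` for every unitary `v`. Applying this to
`v = exp (t a)` for skew-adjoint `a` and differentiating twice at `t = 0` shows that `D` maps
skew-adjoint elements to skew-adjoint ones and satisfies `D (a²) = a D a + (D a) a` on them.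
Since the skew-adjoint elements span `A` over `ℂ`, `D` is a `*`-preserving Jordan derivation,
hence a triple derivation, and so is `T = D + ½(h · + · h)`.
-/

/-- The triple product `{a,b,c} = ½(a b* c + c b* a)` on a C*-algebra. -/
noncomputable def tripleProd {A : Type*} [NonUnitalRing A] [StarRing A] [Module ℂ A]
    (a b c : A) : A :=
  (2 : ℂ)⁻¹ • (a * star b * c + c * star b * a)

open NormedSpace

section

variable {A : Type*}

section TripleDerivation

variable [NonUnitalRing A] [StarRing A] [Module ℂ A]

def IsTripleDerivation (δ : A → A) : Prop :=
  ∀ x y z, δ (tripleProd x y z) = tripleProd (δ x) y z + tripleProd x (δ y) z + tripleProd x y (δ z)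

def IsLocalTripleDerivation (T : A → A) : Prop :=
  ∀ a, ∃ δ : A →ₗ[ℂ] A, IsTripleDerivation δ ∧ T a = δ a

theorem IsTripleDerivation.add {δ δ' : A → A} (hδ : IsTripleDerivation δ)
    (hδ' : IsTripleDerivation δ') : IsTripleDerivation (δ + δ') := by
  intro x y z
  rw [Pi.add_apply, hδ, hδ']
  simp only [Pi.add_apply, tripleProd, star_add, add_mul, mul_add, smul_add]
  abel

theorem IsTripleDerivation.sub {δ δ' : A → A} (hδ : IsTripleDerivation δ)
    (hδ' : IsTripleDerivation δ') : IsTripleDerivation (δ - δ') := by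
  intro x y z
  rw [Pi.sub_apply, hδ, hδ']
  simp only [Pi.sub_apply, tripleProd, star_sub, sub_mul, mul_sub, smul_sub, smul_add]
  abel

theorem IsLocalTripleDerivation.sub {T : A → A} (hT : IsLocalTripleDerivation T)
    {L : A →ₗ[ℂ] A} (hL : IsTripleDerivation L) : IsLocalTripleDerivation (T - ⇑L) := by
  intro a
  obtain ⟨δ, hδ, hTa⟩ := hT a
  exact ⟨δ - L, hδ.sub hL, by simp [hTa]⟩

end TripleDerivation

section StarModule

variable [AddCommGroup A] [Module ℂ A] [StarAddMonoid A] [StarModule ℂ A]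

theorem skewAdjoint_induction {p : A → Prop} (skew : ∀ a ∈ skewAdjoint A, p a)
    (add : ∀ x y, p x → p y → p (x + y)) (smul : ∀ (c : ℂ) x, p x → p (c • x)) (x : A) : p x := by
  have hspan : Submodule.span ℂ (skewAdjoint A : Set A) = ⊤ := by
    refine eq_top_iff.mpr (span_selfAdjoint.symm.le.trans (Submodule.span_le.mpr fun h hh => ?_))
    rw [show h = (-Complex.I) • (Complex.I • h) by simp [smul_smul]]
    exact Submodule.smul_mem _ _ (Submodule.subset_span
      (Complex.I_smul_mem_skewAdjoint_iff_isSelfAdjoint.mpr hh))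
  induction hspan ▸ Submodule.mem_top (x := x) using Submodule.span_induction with
  | mem a ha => exact skew a ha
  | zero => exact skew 0 (zero_mem _)
  | add x y _ _ hx hy => exact add x y hx hy
  | smul c x _ hx => exact smul c x hx

theorem LinearMap.map_star_of_forall_skewAdjoint (D : A →ₗ[ℂ] A)
    (h : ∀ a ∈ skewAdjoint A, star (D a) = -D a) (x : A) : D (star x) = star (D x) := by
  induction x using skewAdjoint_induction with
  | skew a ha => rw [skewAdjoint.mem_iff.mp ha, map_neg, h a ha]
  | add x y hx hy => rw [star_add, map_add, map_add, star_add, hx, hy]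
  | smul c x hx => rw [star_smul, map_smul, map_smul, star_smul, hx]

end StarModule

section JordanDerivation

variable [NonUnitalRing A] [Module ℂ A]

theorem LinearMap.map_mul_mul_add_mul_mul_of_jordan (D : A →ₗ[ℂ] A)
    (h : ∀ x y, D (x * y + y * x) = D x * y + x * D y + D y * x + y * D x) (x w z : A) :
    D (x * w * z + z * w * x) =
      D x * w * z + x * D w * z + x * w * D z + (D z * w * x + z * D w * x + z * w * D x) := by
  have key : (2 : ℂ) • (x * w * z + z * w * x) =
      ((x * w + w * x) * z + z * (x * w + w * x)) + ((z * w + w * z) * x + x * (z * w + w * z)) -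
        ((x * z + z * x) * w + w * (x * z + z * x)) := by
    rw [two_smul]; noncomm_ring
  apply smul_right_injective A (two_ne_zero (α := ℂ))
  dsimp only
  rw [← map_smul, key, map_sub, map_add, h (x * w + w * x), h (z * w + w * z), h (x * z + z * x),
    h x w, h z w, h x z, two_smul]
  noncomm_ring

variable [StarRing A]

theorem isTripleDerivation_of_jordan (D : A →ₗ[ℂ] A) (hstar : ∀ x, D (star x) = star (D x))
    (hjordan : ∀ x y, D (x * y + y * x) = D x * y + x * D y + D y * x + y * D x) :
    IsTripleDerivation D := by
  intro x y z
  simp only [tripleProd, map_smul, D.map_mul_mul_add_mul_mul_of_jordan hjordan, hstar, ← smul_add]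
  congr 1
  noncomm_ring

end JordanDerivation

section StarAlgebra

variable [NonUnitalRing A] [StarRing A] [Module ℂ A] [IsScalarTower ℂ A A] [SMulCommClass ℂ A A]
  [StarModule ℂ A]

theorem LinearMap.map_mul_add_mul_of_forall_skewAdjoint (D : A →ₗ[ℂ] A)
    (h : ∀ a ∈ skewAdjoint A, D (a * a) = a * D a + D a * a) (x y : A) :
    D (x * y + y * x) = D x * y + x * D y + D y * x + y * D x := by
  have pair : ∀ a ∈ skewAdjoint A, ∀ b ∈ skewAdjoint A,
      D (a * b + b * a) = D a * b + a * D b + D b * a + b * D a := by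
    intro a ha b hb
    have hab := h (a + b) (add_mem ha hb)
    rw [show (a + b) * (a + b) = a * a + (a * b + b * a) + b * b by noncomm_ring,
      map_add D (a * a + _), map_add D (a * a), h a ha, h b hb, map_add D a b] at hab
    rw [← sub_eq_zero, ← sub_eq_zero.mpr hab]
    noncomm_ring
  induction x using skewAdjoint_induction generalizing y with
  | skew a ha =>
    induction y using skewAdjoint_induction with
    | skew b hb => exact pair a ha b hb
    | add y y' hy hy' =>
      rw [show a * (y + y') + (y + y') * a = (a * y + y * a) + (a * y' + y' * a) by noncomm_ring,
        map_add, hy, hy', map_add]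
      noncomm_ring
    | smul c y hy =>
      rw [mul_smul_comm, smul_mul_assoc, ← smul_add, map_smul, map_smul, hy]
      simp only [smul_mul_assoc, mul_smul_comm, smul_add]
  | add x x' hx hx' =>
    rw [show (x + x') * y + y * (x + x') = (x * y + y * x) + (x' * y + y * x') by noncomm_ring,
      map_add, hx, hx', map_add]
    noncomm_ring
  | smul c x hx =>
    rw [mul_smul_comm, smul_mul_assoc, ← smul_add, map_smul, map_smul, hx]
    simp only [smul_mul_assoc, mul_smul_comm, smul_add]

/-- This is the inner triple derivation `x ↦ {h/2, 1, x} - {1, h/2, x}`. -/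
theorem isTripleDerivation_smul_mul_add_mul {h : A} (hh : star h = -h) :
    IsTripleDerivation fun x => (2 : ℂ)⁻¹ • (h * x + x * h) := by
  intro x y z
  simp only [tripleProd, star_smul, star_add, star_mul, hh, smul_add, smul_mul_assoc,
    mul_smul_comm, mul_add, add_mul, mul_neg, neg_mul, mul_assoc, smul_smul, smul_neg, star_inv₀,
    star_ofNat]
  module

end StarAlgebra

section Ring

variable [Ring A] [StarRing A] [Module ℂ A]

/-- If `D` is a `*`-derivation, then `starLeibniz D x y = D (x* y)`. -/
def starLeibniz (D : A → A) (x y : A) : A :=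
  star x * D y + star (D x) * y

theorem IsTripleDerivation.starLeibniz_self_of_mem_unitary {δ : A → A} (hδ : IsTripleDerivation δ)
    {v : A} (hv : v ∈ unitary A) : starLeibniz δ v v = 0 := by
  have hv₁ := Unitary.star_mul_self_of_mem hv
  have hv₂ := Unitary.mul_star_self_of_mem hv
  have half : ∀ x : A, (2 : ℂ)⁻¹ • (x + x) = x := fun x => by
    rw [← two_smul ℂ x, smul_smul, inv_mul_cancel₀ two_ne_zero, one_smul]
  have h := hδ v v v
  simp only [tripleProd, hv₁, hv₂, one_mul, mul_one, mul_assoc, half] at h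
  have h' : v * (star (δ v) * v) + δ v = 0 := add_eq_left.mp (by rw [← add_assoc]; exact h.symm)
  calc starLeibniz δ v v = star v * (v * (star (δ v) * v) + δ v) := by
        rw [starLeibniz, mul_add, ← mul_assoc, hv₁, one_mul, add_comm]
    _ = 0 := by rw [h', mul_zero]

theorem IsLocalTripleDerivation.starLeibniz_self_of_mem_unitary {T : A → A}
    (hT : IsLocalTripleDerivation T) {v : A} (hv : v ∈ unitary A) : starLeibniz T v v = 0 := by
  obtain ⟨δ, hδ, hTv⟩ := hT v
  rw [starLeibniz, hTv]
  exact hδ.starLeibniz_self_of_mem_unitary hv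

theorem IsLocalTripleDerivation.star_apply_one {T : A → A} (hT : IsLocalTripleDerivation T) :
    star (T 1) = -T 1 := by
  have h := hT.starLeibniz_self_of_mem_unitary (one_mem (unitary A))
  rw [starLeibniz, star_one, one_mul, mul_one] at h
  exact eq_neg_of_add_eq_zero_right h

end Ring

theorem HasDerivAt.eq_zero_of_forall_eq_zero {E : Type*} [NormedAddCommGroup E] [NormedSpace ℝ E]
    {f : ℝ → E} {f' : E} {t : ℝ} (hf : HasDerivAt f f' t) (h : ∀ s, f s = 0) : f' = 0 :=
  hf.unique ((funext h : f = fun _ => 0) ▸ hasDerivAt_const t 0)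

section CStarAlgebra

variable [CStarAlgebra A]

noncomputable def jordanMul (h : A) : A →L[ℂ] A :=
  (2 : ℂ)⁻¹ • (ContinuousLinearMap.mul ℂ A h + (ContinuousLinearMap.mul ℂ A).flip h)

theorem jordanMul_apply (h x : A) : jordanMul h x = (2 : ℂ)⁻¹ • (h * x + x * h) := rfl

theorem jordanMul_one (h : A) : jordanMul h 1 = h := by
  rw [jordanMul_apply, mul_one, one_mul, ← two_smul ℂ, smul_smul, inv_mul_cancel₀ two_ne_zero,
    one_smul]

theorem hasDerivAt_starLeibniz (D : A →L[ℂ] A) {u w : ℝ → A} {u' w' : A} {t : ℝ}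
    (hu : HasDerivAt u u' t) (hw : HasDerivAt w w' t) :
    HasDerivAt (fun s => starLeibniz D (u s) (w s))
      (starLeibniz D u' (w t) + starLeibniz D (u t) w') t := by
  have hDu := (D.restrictScalars ℝ).hasFDerivAt.comp_hasDerivAt t hu
  have hDw := (D.restrictScalars ℝ).hasFDerivAt.comp_hasDerivAt t hw
  refine ((hu.star.mul hDw).add (hDu.star.mul hw)).congr_deriv ?_
  simp only [starLeibniz, ContinuousLinearMap.coe_restrictScalars', Function.comp_apply]
  abel

theorem starLeibniz_identities_of_mem_skewAdjoint {D : A →L[ℂ] A}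
    (hD : ∀ v ∈ unitary A, starLeibniz D v v = 0) {a : A} (ha : a ∈ skewAdjoint A) :
    starLeibniz D a 1 + starLeibniz D 1 a = 0 ∧
      starLeibniz D (a * a) 1 + starLeibniz D a a + (starLeibniz D a a + starLeibniz D 1 (a * a))
        = 0 := by
  -- `exp_mem_unitary_of_mem_skewAdjoint` asks for a `ℚ`-normed algebra structure
  let +nondep : NormedAlgebra ℚ A := .restrictScalars ℚ ℂ A
  have hu : ∀ t : ℝ, HasDerivAt (fun s : ℝ => exp (s • a)) (a * exp (t • a)) t :=
    hasDerivAt_exp_smul_const' a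
  have hau : ∀ t : ℝ, HasDerivAt (fun s : ℝ => a * exp (s • a)) (a * (a * exp (t • a))) t :=
    fun t => (hu t).const_mul a
  have hF' : ∀ t : ℝ, starLeibniz D (a * exp (t • a)) (exp (t • a)) +
      starLeibniz D (exp (t • a)) (a * exp (t • a)) = 0 := fun t =>
    (hasDerivAt_starLeibniz D (hu t) (hu t)).eq_zero_of_forall_eq_zero fun s =>
      hD _ (exp_mem_unitary_of_mem_skewAdjoint (skewAdjoint.smul_mem s ha))
  have hF'' := ((hasDerivAt_starLeibniz D (hau 0) (hu 0)).add
    (hasDerivAt_starLeibniz D (hu 0) (hau 0))).eq_zero_of_forall_eq_zero hF'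
  have hF'₀ := hF' 0
  simp only [zero_smul, exp_zero, mul_one] at hF'₀ hF''
  exact ⟨hF'₀, hF''⟩

theorem isTripleDerivation_of_starLeibniz {D : A →L[ℂ] A} (hD1 : D 1 = 0)
    (hD : ∀ v ∈ unitary A, starLeibniz D v v = 0) : IsTripleDerivation D := by
  have hskew : ∀ a ∈ skewAdjoint A, star (D a) = -D a := fun a ha => by
    have h := (starLeibniz_identities_of_mem_skewAdjoint hD ha).1
    simp only [starLeibniz, hD1, star_zero, star_one, mul_zero, zero_mul, mul_one, one_mul,
      zero_add, add_zero] at h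
    exact eq_neg_of_add_eq_zero_left h
  have hstar := (D : A →ₗ[ℂ] A).map_star_of_forall_skewAdjoint hskew
  have hsq : ∀ a ∈ skewAdjoint A, D (a * a) = a * D a + D a * a := fun a ha => by
    have h := (starLeibniz_identities_of_mem_skewAdjoint hD ha).2
    have ha' := skewAdjoint.mem_iff.mp ha
    have hsa : star (a * a) = a * a := by rw [star_mul, ha', neg_mul_neg]
    rw [starLeibniz, starLeibniz, starLeibniz, ← ContinuousLinearMap.coe_coe, ← hstar, hsa, ha',
      ContinuousLinearMap.coe_coe, hskew a ha, hD1, star_zero, star_one, one_mul, mul_one, mul_zero,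
      zero_mul, add_zero] at h
    apply smul_right_injective A (two_ne_zero (α := ℂ))
    simp only [two_smul]
    rw [← sub_eq_zero, ← h]
    noncomm_ring
  exact isTripleDerivation_of_jordan (D : A →ₗ[ℂ] A) hstar
    ((D : A →ₗ[ℂ] A).map_mul_add_mul_of_forall_skewAdjoint hsq)

end CStarAlgebra

end

/-- **Burgos–Fernández-Polo–Garcés–Peralta.**  Every bounded local triple derivation
on a unital C*-algebra is a triple derivation. -/
theorem bounded_local_triple_derivation_is_triple_derivation
    {A : Type*} [CStarAlgebra A] (T : A →L[ℂ] A)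
    (hloc : ∀ a : A, ∃ δ : A →ₗ[ℂ] A,
      (∀ x y z : A,
        δ (tripleProd x y z) = tripleProd (δ x) y z + tripleProd x (δ y) z + tripleProd x y (δ z)) ∧
      T a = δ a) :
    ∀ a b c : A,
      T (tripleProd a b c) = tripleProd (T a) b c + tripleProd a (T b) c + tripleProd a b (T c) := by
  have hT : IsLocalTripleDerivation T := hloc
  have hL : IsTripleDerivation (jordanMul (T 1)) :=
    isTripleDerivation_smul_mul_add_mul hT.star_apply_one
  have hD : IsLocalTripleDerivation (T - jordanMul (T 1)) := hT.sub (L := jordanMul (T 1)) hL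
  have hD1 : (T - jordanMul (T 1)) 1 = 0 := by rw [sub_apply, jordanMul_one, sub_self]
  have hDder := isTripleDerivation_of_starLeibniz hD1 fun _ => hD.starLeibniz_self_of_mem_unitary
  have h := hDder.add hL
  rwa [FunLike.coe_sub, sub_add_cancel] at h
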